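/- The eccentricity vector ε(x,p) = -x/‖x‖ + (p × (x × p))/(m²k) is a first integral of the Kepler problem: along any solution of x' = p/m, p' = -mk x/‖x‖³ with x(t) ≠ 0, the curve t ↦ ε(x(t),p(t)) is constant. -/

import Mathlib

/-!
Since `x' = p/m` is parallel to `p` and `p'` is parallel to `x`, the angular momentum `x × p` is
conserved and `p × (x × p)` has derivative `-(mk/‖x‖³) (⟪x, p⟫ x - ‖x‖² p)`. This exactly cancels the
derivative `(‖x‖² x' - ⟪x, x'⟫ x)/‖x‖³` of the radial unit vector `x/‖x‖`, so `ε` has zero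
derivative on the interval and is therefore constant.
-/

noncomputable def cross3 (a b : EuclideanSpace ℝ (Fin 3)) : EuclideanSpace ℝ (Fin 3) :=
  (WithLp.equiv 2 (Fin 3 → ℝ)).symm
    (crossProduct (WithLp.equiv 2 (Fin 3 → ℝ) a) (WithLp.equiv 2 (Fin 3 → ℝ) b))

open scoped RealInnerProductSpace

section UnitVector

variable {F : Type*} [NormedAddCommGroup F] [InnerProductSpace ℝ F] {f : ℝ → F} {f' : F} {t : ℝ}

theorem HasDerivAt.norm (hf : HasDerivAt f f' t) (h0 : f t ≠ 0) :
    HasDerivAt (fun s => ‖f s‖) (⟪f t, f'⟫ / ‖f t‖) t := by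
  have hsq : HasDerivAt (fun s => √(‖f s‖ ^ 2)) (2 * ⟪f t, f'⟫ / (2 * √(‖f t‖ ^ 2))) t :=
    hf.norm_sq.sqrt (by positivity)
  simpa [Real.sqrt_sq (norm_nonneg _), mul_div_mul_left] using hsq

theorem HasDerivAt.inv_norm_smul (hf : HasDerivAt f f' t) (h0 : f t ≠ 0) :
    HasDerivAt (fun s => ‖f s‖⁻¹ • f s)
      (‖f t‖⁻¹ • f' - (⟪f t, f'⟫ / ‖f t‖ ^ 3) • f t) t := by
  have hr : ‖f t‖ ≠ 0 := norm_ne_zero_iff.mpr h0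
  refine (((hf.norm h0).fun_inv hr).smul hf).congr_deriv ?_
  rw [sub_eq_add_neg, ← neg_smul]
  congr 2
  field_simp

end UnitVector

local notation "ℝ³" => EuclideanSpace ℝ (Fin 3)

theorem isBilinearMap_cross3 : IsBilinearMap ℝ cross3 where
  add_left _ _ _ := by simp [cross3]
  smul_left _ _ _ := by simp [cross3]
  add_right _ _ _ := by simp [cross3]
  smul_right _ _ _ := by simp [cross3]

theorem cross3_self (a : ℝ³) : cross3 a a = 0 := by
  simp [cross3]

theorem cross3_zero_right (a : ℝ³) : cross3 a 0 = 0 := by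
  simp [cross3]

theorem cross3_cross3 (u v w : ℝ³) : cross3 u (cross3 v w) = ⟪u, w⟫ • v - ⟪u, v⟫ • w := by
  simp [cross3, cross_cross_eq_smul_sub_smul', EuclideanSpace.inner_eq_star_dotProduct,
    dotProduct_comm]

theorem HasDerivAt.cross3 {f g : ℝ → ℝ³} {f' g' : ℝ³} {t : ℝ}
    (hf : HasDerivAt f f' t) (hg : HasDerivAt g g' t) :
    HasDerivAt (fun s => cross3 (f s) (g s)) (cross3 f' (g t) + cross3 (f t) g') t :=
  (isBilinearMap_cross3.toContinuousBilinearMap.hasFDerivAt.comp_hasDerivAt t hf).clm_apply hg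

theorem hasDerivAt_cross3_cross3_of_central {x p : ℝ → ℝ³} {c d t : ℝ}
    (hx : HasDerivAt x (c • p t) t) (hp : HasDerivAt p (d • x t) t) :
    HasDerivAt (fun s => cross3 (p s) (cross3 (x s) (p s)))
      (d • (⟪x t, p t⟫ • x t - ‖x t‖ ^ 2 • p t)) t := by
  refine (hp.cross3 (hx.cross3 hp)).congr_deriv ?_
  simp only [isBilinearMap_cross3.smul_left, isBilinearMap_cross3.smul_right, cross3_self,
    smul_zero, add_zero, cross3_zero_right, cross3_cross3, real_inner_self_eq_norm_sq]

noncomputable def keplerEccentricity (m k : ℝ) (x p : ℝ³) : ℝ³ :=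
  -(‖x‖⁻¹) • x + (1 / (m ^ 2 * k)) • cross3 p (cross3 x p)

theorem hasDerivAt_keplerEccentricity {m k t : ℝ} {x p : ℝ → ℝ³} (hm : m ≠ 0) (hk : k ≠ 0)
    (hx0 : x t ≠ 0) (hx : HasDerivAt x ((1 / m) • p t) t)
    (hp : HasDerivAt p (-(m * k / ‖x t‖ ^ 3) • x t) t) :
    HasDerivAt (fun s => keplerEccentricity m k (x s) (p s)) 0 t := by
  simp only [keplerEccentricity, neg_smul]
  refine ((hx.inv_norm_smul hx0).fun_neg.fun_add
    ((hasDerivAt_cross3_cross3_of_central hx hp).fun_const_smul (1 / (m ^ 2 * k)))).congr_deriv ?_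
  have hr : ‖x t‖ ≠ 0 := norm_ne_zero_iff.mpr hx0
  simp only [inner_smul_right, real_inner_comm (p t) (x t)]
  match_scalars <;> field_simp <;> ring

/-- The eccentricity vector `ε(x,p) = -x/‖x‖ + (p × (x × p))/(m²k)` is a first
integral of the Kepler problem: along any solution of `x' = p/m`,
`p' = -(mk/‖x‖³)·x` with `x(t) ≠ 0` on an open interval, the curve
`t ↦ ε(x(t),p(t))` is constant. -/
theorem kepler_eccentricity_vector_first_integral
    (m k a b : ℝ) (hm : 0 < m) (hk : 0 < k)
    (x p : ℝ → EuclideanSpace ℝ (Fin 3))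
    (hx0 : ∀ t ∈ Set.Ioo a b, x t ≠ 0)
    (hx' : ∀ t ∈ Set.Ioo a b, HasDerivAt x ((1 / m) • p t) t)
    (hp' : ∀ t ∈ Set.Ioo a b, HasDerivAt p (-(m * k / ‖x t‖ ^ 3) • x t) t) :
    ∀ s ∈ Set.Ioo a b, ∀ t ∈ Set.Ioo a b,
      -(‖x s‖⁻¹) • x s + (1 / (m ^ 2 * k)) • cross3 (p s) (cross3 (x s) (p s))
        = -(‖x t‖⁻¹) • x t + (1 / (m ^ 2 * k)) • cross3 (p t) (cross3 (x t) (p t)) := by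
  have hε : ∀ t ∈ Set.Ioo a b, HasDerivAt (fun s => keplerEccentricity m k (x s) (p s)) 0 t :=
    fun t ht => hasDerivAt_keplerEccentricity hm.ne' hk.ne' (hx0 t ht) (hx' t ht) (hp' t ht)
  intro s hs t ht
  exact isOpen_Ioo.is_const_of_deriv_eq_zero isPreconnected_Ioo
    (fun u hu => (hε u hu).differentiableAt.differentiableWithinAt) (fun u hu => (hε u hu).deriv)
    hs ht
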